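/- arXiv:2605.10543 — 7 statements merged into one kernel-verified Lean document; each statement's English description precedes it below -/
import Mathlib

section
/- For every c ∈ ℝ and r > 0, the uniform average of the RoPE matrix over the interval [c − r, c + r] equals the interval matrix: (1/(2r)) ∫_{c−r}^{c+r} R_τ dτ = R_{c,r}, where the integral is taken entrywise. Consequently, for every k ∈ ℝ^{2n}, (1/(2r)) ∫_{c−r}^{c+r} R_τ k dτ = R_{c,r} k. -/
noncomputable section

open MeasureTheory
open scoped RealInnerProductSpace

/-- `sinc x = sin x / x` for `x ≠ 0`, and `sinc 0 = 1`. -/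
def sinc (x : ℝ) : ℝ := if x = 0 then 1 else Real.sin x / x

/-- The 2×2 rotation matrix. -/
def Rot (x : ℝ) : Matrix (Fin 2) (Fin 2) ℝ :=
  !![Real.cos x, -Real.sin x; Real.sin x, Real.cos x]

/-- The RoPE matrix `R_t`: block diagonal with ℓ-th block `Rot (θ ℓ * t)`. -/
def RoPE {n : ℕ} (θ : Fin n → ℝ) (t : ℝ) :
    Matrix (Fin 2 × Fin n) (Fin 2 × Fin n) ℝ :=
  Matrix.blockDiagonal fun ℓ => Rot (θ ℓ * t)

/-- The interval (RoTE) matrix `R_{c,r}`: block diagonal with ℓ-th block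
`sinc (θ ℓ * r) • Rot (θ ℓ * c)`. -/
def RoTE {n : ℕ} (θ : Fin n → ℝ) (c r : ℝ) :
    Matrix (Fin 2 × Fin n) (Fin 2 × Fin n) ℝ :=
  Matrix.blockDiagonal fun ℓ => sinc (θ ℓ * r) • Rot (θ ℓ * c)

/-- The normalization constant `C_r = (1/n) ∑ ℓ, sinc (θ ℓ * r)`. -/
def Cnorm {n : ℕ} (θ : Fin n → ℝ) (r : ℝ) : ℝ :=
  (1 / (n : ℝ)) * ∑ ℓ : Fin n, sinc (θ ℓ * r)

/-- Action of a `2n × 2n` matrix on Euclidean space `ℝ^{2n}`. -/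
def mApply {n : ℕ} (M : Matrix (Fin 2 × Fin n) (Fin 2 × Fin n) ℝ)
    (v : EuclideanSpace ℝ (Fin 2 × Fin n)) : EuclideanSpace ℝ (Fin 2 × Fin n) :=
  Matrix.toEuclideanLin M v

/-- Operator norm on `ℝ^{2n×2n}` induced by the Euclidean norm on `ℝ^{2n}`. -/
def opNorm {n : ℕ} (M : Matrix (Fin 2 × Fin n) (Fin 2 × Fin n) ℝ) : ℝ :=
  ‖Matrix.toEuclideanCLM (𝕜 := ℝ) M‖

lemma avg_cos (θ c r : ℝ) (hr : 0 < r) :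
    (1 / (2 * r)) * ∫ τ in (c - r)..(c + r), Real.cos (θ * τ)
      = sinc (θ * r) * Real.cos (θ * c) := by
  by_cases hθ : θ = 0
  · subst hθ
    simp [sinc]
    field_simp
    ring
  · have hθr : θ * r ≠ 0 := mul_ne_zero hθ hr.ne'
    rw [intervalIntegral.integral_comp_mul_left Real.cos hθ, integral_cos]
    simp only [sinc, if_neg hθr, smul_eq_mul]
    rw [show θ * (c + r) = θ * c + θ * r by ring, show θ * (c - r) = θ * c - θ * r by ring,
      Real.sin_add, Real.sin_sub]
    field_simp
    ring

lemma avg_sin (θ c r : ℝ) (hr : 0 < r) :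
    (1 / (2 * r)) * ∫ τ in (c - r)..(c + r), Real.sin (θ * τ)
      = sinc (θ * r) * Real.sin (θ * c) := by
  by_cases hθ : θ = 0
  · subst hθ
    simp [sinc]
  · have hθr : θ * r ≠ 0 := mul_ne_zero hθ hr.ne'
    rw [intervalIntegral.integral_comp_mul_left Real.sin hθ, integral_sin]
    simp only [sinc, if_neg hθr, smul_eq_mul]
    rw [show θ * (c + r) = θ * c + θ * r by ring, show θ * (c - r) = θ * c - θ * r by ring,
      Real.cos_add, Real.cos_sub]
    field_simp
    ring

lemma rope_apply {n : ℕ} (θ : Fin n → ℝ) (t : ℝ) (a b : Fin 2) (ℓ m : Fin n) :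
    RoPE θ t (a, ℓ) (b, m) = if ℓ = m then Rot (θ ℓ * t) a b else 0 := by
  simp [RoPE, Matrix.blockDiagonal_apply]

lemma rope_cont {n : ℕ} (θ : Fin n → ℝ) (i j : Fin 2 × Fin n) :
    Continuous fun t => RoPE θ t i j := by
  obtain ⟨a, ℓ⟩ := i; obtain ⟨b, m⟩ := j
  simp only [rope_apply]
  split
  · fin_cases a <;> fin_cases b <;> simp [Rot] <;> fun_prop
  · exact continuous_const

lemma entry_avg {n : ℕ} (θ : Fin n → ℝ) (c r : ℝ) (hr : 0 < r) (i j : Fin 2 × Fin n) :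
    (1 / (2 * r)) * (∫ τ in (c - r)..(c + r), RoPE θ τ i j) = RoTE θ c r i j := by
  obtain ⟨a, ℓ⟩ := i; obtain ⟨b, m⟩ := j
  simp only [rope_apply, RoTE, Matrix.blockDiagonal_apply]
  by_cases h : ℓ = m
  · subst h
    simp only [if_pos rfl, if_true, Matrix.smul_apply, smul_eq_mul]
    fin_cases a <;> fin_cases b <;>
      simp only [Rot, Matrix.cons_val', Matrix.cons_val_zero, Matrix.cons_val_one,
        Matrix.head_cons, Matrix.empty_val', Matrix.cons_val_fin_one, Matrix.head_fin_const,
        Fin.zero_eta, Fin.mk_one, if_true, Matrix.of_apply]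
    · exact avg_cos _ _ _ hr
    · rw [intervalIntegral.integral_neg, mul_neg, avg_sin _ _ _ hr, mul_neg]
    · exact avg_sin _ _ _ hr
    · exact avg_cos _ _ _ hr
  · simp [if_neg h]

/-- the uniform average of the RoPE matrix over `[c−r, c+r]`
(taken entrywise) equals the interval matrix `R_{c,r}`; consequently the same
holds for the action on any vector `k`. -/
theorem uniform_average_rope (n : ℕ) (hn : 1 ≤ n) (θ : Fin n → ℝ)
    (c r : ℝ) (hr : 0 < r) :
    (∀ i j : Fin 2 × Fin n,
        (1 / (2 * r)) * (∫ τ in (c - r)..(c + r), RoPE θ τ i j) = RoTE θ c r i j) ∧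
    (∀ k : EuclideanSpace ℝ (Fin 2 × Fin n),
        (1 / (2 * r)) • (∫ τ in (c - r)..(c + r), mApply (RoPE θ τ) k) =
          mApply (RoTE θ c r) k) := by
  refine ⟨entry_avg θ c r hr, fun k => ?_⟩
  have hcoord : ∀ (M : Matrix (Fin 2 × Fin n) (Fin 2 × Fin n) ℝ) (i : Fin 2 × Fin n),
      mApply M k i = ∑ j, M i j * k j := by
    intro M i
    simp [mApply, Matrix.toEuclideanLin_apply, Matrix.mulVec, dotProduct]
  have hfc : Continuous fun τ => mApply (RoPE θ τ) k := by
    rw [show (fun τ => mApply (RoPE θ τ) k)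
        = (WithLp.equiv 2 (Fin 2 × Fin n → ℝ)).symm ∘
          fun τ i => ∑ j, RoPE θ τ i j * k j from funext fun τ => by
            ext i; simp only [hcoord]; rfl]
    exact (PiLp.continuous_toLp 2 _).comp
      (continuous_pi fun i => continuous_finset_sum _ fun j _ =>
        (rope_cont θ i j).mul continuous_const)
  have hint : IntervalIntegrable (fun τ => mApply (RoPE θ τ) k) volume (c - r) (c + r) :=
    hfc.intervalIntegrable _ _
  ext i
  have hproj := (EuclideanSpace.proj (𝕜 := ℝ) i).intervalIntegral_comp_comm hint
  simp only [PiLp.smul_apply, smul_eq_mul]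
  have : (∫ τ in (c - r)..(c + r), mApply (RoPE θ τ) k) i
      = ∫ τ in (c - r)..(c + r), mApply (RoPE θ τ) k i := by
    exact (hproj).symm
  rw [this]
  simp only [hcoord]
  rw [intervalIntegral.integral_finset_sum (f := fun j τ => RoPE θ τ i j * k j) (fun j _ =>
    ((rope_cont θ i j).mul continuous_const).intervalIntegrable _ _), Finset.mul_sum]
  refine Finset.sum_congr rfl fun j _ => ?_
  rw [intervalIntegral.integral_mul_const, ← mul_assoc, entry_avg θ c r hr i j]
end
end

section
/- For every c ∈ ℝ and r > 0, tr(R_cᵀ R_{c,r}) = 2 Σ_{ℓ=0}^{n−1} sinc(θ_ℓ r). -/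
noncomputable section

open MeasureTheory
open scoped RealInnerProductSpace

section

open scoped Matrix

theorem Rot_transpose_mul_self (x : ℝ) : (Rot x)ᵀ * Rot x = 1 := by
  ext i j
  fin_cases i <;> fin_cases j <;> simp [Rot, Matrix.mul_apply, ← sq, mul_comm]

theorem Matrix.trace_blockDiagonal_transpose_mul_smul {m o R : Type*} [Fintype m]
    [DecidableEq m] [Fintype o] [DecidableEq o] [CommSemiring R] (A : o → Matrix m m R)
    (hA : ∀ ℓ, (A ℓ)ᵀ * A ℓ = 1) (s : o → R) :
    trace ((blockDiagonal A)ᵀ * blockDiagonal fun ℓ => s ℓ • A ℓ) =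
      Fintype.card m * ∑ ℓ, s ℓ := by
  rw [blockDiagonal_transpose, ← blockDiagonal_mul, trace_blockDiagonal, Finset.mul_sum]
  refine Finset.sum_congr rfl fun ℓ _ => ?_
  rw [Matrix.mul_smul, hA, trace_smul, trace_one, smul_eq_mul, mul_comm]

end

theorem trace_rope_rote_general (n : ℕ) (θ : Fin n → ℝ)
    (c r : ℝ) :
    Matrix.trace ((RoPE θ c).transpose * RoTE θ c r) = 2 * ∑ ℓ : Fin n, sinc (θ ℓ * r) := by
  rw [RoPE, RoTE]
  simpa using Matrix.trace_blockDiagonal_transpose_mul_smul _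
    (fun ℓ => Rot_transpose_mul_self (θ ℓ * c)) fun ℓ => sinc (θ ℓ * r)

/-- `tr(R_cᵀ R_{c,r}) = 2 ∑_ℓ sinc (θ_ℓ r)`. -/
theorem trace_rope_rote (n : ℕ) (hn : 1 ≤ n) (θ : Fin n → ℝ)
    (c r : ℝ) (hr : 0 < r) :
    Matrix.trace ((RoPE θ c).transpose * RoTE θ c r) = 2 * ∑ ℓ : Fin n, sinc (θ ℓ * r) :=
  trace_rope_rote_general n θ c r
end
end

section
/- For every query vector q ∈ ℝ^{2n}, key vector k ∈ ℝ^{2n}, query time t ∈ ℝ, interval center c ∈ ℝ, and radius r > 0, the point-to-interval attention score has the closed form ⟨R_t q, R_{c,r} k⟩ = ⟨q, S k⟩, where S ∈ ℝ^{2n×2n} is the block-diagonal matrix whose ℓ-th 2×2 diagonal block is sinc(θ_ℓ r)·Rot(θ_ℓ (c − t)). -/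
noncomputable section

open MeasureTheory
open scoped RealInnerProductSpace

open Matrix in
lemma Rot_transpose_aux (a : ℝ) : (Rot a)ᵀ = Rot (-a) := by
  ext i j
  fin_cases i <;> fin_cases j <;> simp [Rot]

open Matrix in
lemma Rot_key_aux (a b s : ℝ) : (Rot a)ᵀ * (s • Rot b) = s • Rot (b - a) := by
  rw [Rot_transpose_aux]
  ext i j
  fin_cases i <;> fin_cases j <;>
    simp [Rot, Matrix.mul_apply, Fin.sum_univ_two, Real.cos_sub, Real.sin_sub,
      Real.cos_neg, Real.sin_neg] <;> ring

open Matrix in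
lemma inner_mApply_mApply_aux {n : ℕ} (M N : Matrix (Fin 2 × Fin n) (Fin 2 × Fin n) ℝ)
    (q k : EuclideanSpace ℝ (Fin 2 × Fin n)) :
    ⟪mApply M q, mApply N k⟫ = ⟪q, mApply (Mᵀ * N) k⟫ := by
  unfold mApply
  simp only [PiLp.inner_apply, RCLike.inner_apply, starRingEnd_apply, star_trivial]
  show (N *ᵥ k.ofLp) ⬝ᵥ (M *ᵥ q.ofLp) = ((Mᵀ*N) *ᵥ k.ofLp) ⬝ᵥ q.ofLp
  rw [dotProduct_comm (N *ᵥ k.ofLp), dotProduct_comm ((Mᵀ*N) *ᵥ k.ofLp)]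
  rw [Matrix.dotProduct_mulVec, Matrix.dotProduct_mulVec, ← Matrix.vecMul_vecMul,
    Matrix.vecMul_transpose]

/-- closed form of the point-to-interval attention score:
`⟨R_t q, R_{c,r} k⟩ = ⟨q, S k⟩` where `S` is block diagonal with ℓ-th block
`sinc (θ_ℓ r) • Rot (θ_ℓ (c − t))`. -/
theorem point_to_interval_score (n : ℕ) (hn : 1 ≤ n) (θ : Fin n → ℝ)
    (q k : EuclideanSpace ℝ (Fin 2 × Fin n)) (t c r : ℝ) (hr : 0 < r) :
    ⟪mApply (RoPE θ t) q, mApply (RoTE θ c r) k⟫ =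
      ⟪q, mApply
        (Matrix.blockDiagonal fun ℓ => sinc (θ ℓ * r) • Rot (θ ℓ * (c - t))) k⟫ := by
  have hm : (RoPE θ t).transpose * RoTE θ c r =
      Matrix.blockDiagonal (fun ℓ => sinc (θ ℓ * r) • Rot (θ ℓ * (c - t))) := by
    unfold RoPE RoTE
    rw [Matrix.blockDiagonal_transpose, ← Matrix.blockDiagonal_mul]
    apply congrArg
    funext ℓ
    rw [Rot_key_aux, ← mul_sub]
  rw [inner_mApply_mApply_aux, hm]
end
end

section
/- For every c ∈ ℝ and r > 0, the operator norm of the interval matrix is at most one: ‖R_{c,r}‖_op ≤ 1. -/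
noncomputable section

open MeasureTheory
open scoped RealInnerProductSpace

/-! Each diagonal block of `RoTE θ c r` is `sinc (θ ℓ * r)` times a rotation. Rotations are
orthogonal, `|sinc| ≤ 1`, and the L2 operator norm of a block-diagonal matrix is at most the largest
norm of its blocks. -/

open Matrix
open scoped Matrix.Norms.L2Operator

lemma abs_sinc_le_one (x : ℝ) : |sinc x| ≤ 1 := by
  unfold sinc
  split_ifs with h
  · simp
  · rw [abs_div, div_le_one (abs_pos.mpr h)]
    exact Real.abs_sin_le_abs

lemma rot_mem_unitaryGroup (x : ℝ) : Rot x ∈ unitaryGroup (Fin 2) ℝ := by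
  rw [mem_unitaryGroup_iff, star_eq_conjTranspose, conjTranspose_eq_transpose_of_trivial]
  ext i j
  fin_cases i <;> fin_cases j <;> simp [Rot, mul_apply, Fin.sum_univ_two, mul_comm, ← sq]

lemma l2_opNorm_rot (x : ℝ) : ‖Rot x‖ = 1 :=
  CStarRing.norm_of_mem_unitary (rot_mem_unitaryGroup x)

section BlockDiagonal

variable {𝕜 m n o : Type*} [RCLike 𝕜] [Fintype n] [Fintype o] [DecidableEq o]

lemma blockDiagonal_mulVec (M : o → Matrix m n 𝕜) (x : n × o → 𝕜) (i : m) (k : o) :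
    (blockDiagonal M *ᵥ x) (i, k) = (M k *ᵥ fun j => x (j, k)) i := by
  simp only [mulVec, dotProduct, blockDiagonal_apply, ite_mul, zero_mul, Fintype.sum_prod_type,
    Finset.sum_ite_eq, Finset.mem_univ, if_true]

lemma l2_opNorm_blockDiagonal_le [Fintype m] [DecidableEq n] {M : o → Matrix m n 𝕜} {C : ℝ}
    (hC : 0 ≤ C) (hM : ∀ k, ‖M k‖ ≤ C) : ‖blockDiagonal M‖ ≤ C := by
  rw [l2_opNorm_def]
  refine ContinuousLinearMap.opNorm_le_bound _ hC fun x => ?_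
  set slice : o → EuclideanSpace 𝕜 n := fun k => WithLp.toLp 2 fun j => x (j, k)
  have hslice : ∀ k, ‖(EuclideanSpace.equiv m 𝕜).symm (M k *ᵥ slice k)‖ ≤ C * ‖slice k‖ :=
    fun k => (l2_opNorm_mulVec _ _).trans (by gcongr; exact hM k)
  have hsq : ‖(EuclideanSpace.equiv (m × o) 𝕜).symm (blockDiagonal M *ᵥ x)‖ ^ 2
      ≤ (C * ‖x‖) ^ 2 :=
    calc _ = ∑ k, ‖(EuclideanSpace.equiv m 𝕜).symm (M k *ᵥ slice k)‖ ^ 2 := by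
          simp only [EuclideanSpace.norm_sq_eq, Fintype.sum_prod_type]
          rw [Finset.sum_comm]
          simp [slice, blockDiagonal_mulVec]
      _ ≤ ∑ k, (C * ‖slice k‖) ^ 2 := by gcongr with k; exact hslice k
      _ = (C * ‖x‖) ^ 2 := by
          simp only [mul_pow, ← Finset.mul_sum, EuclideanSpace.norm_sq_eq, Fintype.sum_prod_type]
          rw [Finset.sum_comm (s := Finset.univ (α := n))]
  exact (pow_le_pow_iff_left₀ (norm_nonneg _) (by positivity) two_ne_zero).mp hsq

end BlockDiagonal

theorem rote_opNorm_le_one_general (n : ℕ) (θ : Fin n → ℝ)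
    (c r : ℝ) :
    opNorm (RoTE θ c r) ≤ 1 := by
  rw [opNorm, l2_opNorm_toEuclideanCLM]
  refine l2_opNorm_blockDiagonal_le zero_le_one fun ℓ => ?_
  rw [norm_smul, l2_opNorm_rot, mul_one, Real.norm_eq_abs]
  exact abs_sinc_le_one _

/-- the operator norm of the interval matrix is at most one. -/
theorem rote_opNorm_le_one (n : ℕ) (hn : 1 ≤ n) (θ : Fin n → ℝ)
    (c r : ℝ) (hr : 0 < r) :
    opNorm (RoTE θ c r) ≤ 1 :=
  rote_opNorm_le_one_general n θ c r
end
end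

section
/- For every fixed r > 0, the map c ↦ R_{c,r} is Lipschitz in operator norm with constant 1/r: for all c₁, c₂ ∈ ℝ, ‖R_{c₁,r} − R_{c₂,r}‖_op ≤ |c₁ − c₂| / r. -/
noncomputable section

open MeasureTheory
open scoped RealInnerProductSpace

/-!
The difference `R_{c₁,r} - R_{c₂,r}` is block diagonal with blocks
`sinc (θ r) • (Rot (θ c₁) - Rot (θ c₂))`, and the operator norm of a block-diagonal matrix is at
most the largest norm of its blocks. A difference of rotations has the form `!![p, -q; q, p]`,
which scales every vector by `√(p² + q²) = |2 sin (θ (c₁ - c₂) / 2)| ≤ |θ| |c₁ - c₂|`. Finally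
`|sinc (θ r)| |θ| = |sin (θ r)| / r ≤ 1 / r`.
-/

open Matrix WithLp

theorem Matrix.norm_toEuclideanCLM_blockDiagonal_le {𝕜 m o : Type*} [RCLike 𝕜] [Fintype m]
    [DecidableEq m] [Fintype o] [DecidableEq o] (B : o → Matrix m m 𝕜) {K : ℝ} (hK : 0 ≤ K)
    (hB : ∀ i, ‖toEuclideanCLM (𝕜 := 𝕜) (B i)‖ ≤ K) :
    ‖toEuclideanCLM (𝕜 := 𝕜) (blockDiagonal B)‖ ≤ K := by
  let col (x : EuclideanSpace 𝕜 (m × o)) (i : o) : EuclideanSpace 𝕜 m := toLp 2 fun j => x (j, i)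
  have norm_sq_eq_sum_col (x : EuclideanSpace 𝕜 (m × o)) : ‖x‖ ^ 2 = ∑ i, ‖col x i‖ ^ 2 := by
    simp only [EuclideanSpace.norm_sq_eq, Fintype.sum_prod_type_right]
    rfl
  have col_apply (x : EuclideanSpace 𝕜 (m × o)) (i : o) :
      col (toEuclideanCLM (𝕜 := 𝕜) (blockDiagonal B) x) i =
        toEuclideanCLM (𝕜 := 𝕜) (B i) (col x i) := by
    ext j
    simp [col, mulVec, dotProduct, Fintype.sum_prod_type_right, blockDiagonal_apply]
  refine ContinuousLinearMap.opNorm_le_bound _ hK fun v => ?_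
  refine le_of_pow_le_pow_left₀ two_ne_zero (by positivity) ?_
  calc ‖toEuclideanCLM (𝕜 := 𝕜) (blockDiagonal B) v‖ ^ 2
      = ∑ i, ‖toEuclideanCLM (𝕜 := 𝕜) (B i) (col v i)‖ ^ 2 := by
        simp only [norm_sq_eq_sum_col, col_apply]
    _ ≤ ∑ i, (K * ‖col v i‖) ^ 2 := by
        gcongr with i
        exact (ContinuousLinearMap.le_opNorm _ _).trans (by gcongr; exact hB i)
    _ = (K * ‖v‖) ^ 2 := by simp only [mul_pow, ← Finset.mul_sum, norm_sq_eq_sum_col]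

theorem norm_toEuclideanCLM_rotationScaling_le (p q : ℝ) :
    ‖toEuclideanCLM (𝕜 := ℝ) !![p, -q; q, p]‖ ≤ √(p ^ 2 + q ^ 2) := by
  refine ContinuousLinearMap.opNorm_le_bound _ (Real.sqrt_nonneg _) fun v => ?_
  refine le_of_pow_le_pow_left₀ two_ne_zero (by positivity) (le_of_eq ?_)
  rw [mul_pow, Real.sq_sqrt (by positivity), EuclideanSpace.real_norm_sq_eq,
    EuclideanSpace.real_norm_sq_eq]
  simp only [ofLp_toEuclideanCLM, mulVec, dotProduct, of_apply, cons_val', cons_val_fin_one,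
    Fin.sum_univ_two, cons_val_zero, cons_val_one, neg_mul]
  ring

theorem cos_sub_cos_sq_add_sin_sub_sin_sq_le (a b : ℝ) :
    (Real.cos a - Real.cos b) ^ 2 + (Real.sin a - Real.sin b) ^ 2 ≤ (a - b) ^ 2 := by
  have h : (Real.cos a - Real.cos b) ^ 2 + (Real.sin a - Real.sin b) ^ 2
      = 2 * (1 - Real.cos (a - b)) := by
    rw [Real.cos_sub]
    linear_combination Real.sin_sq_add_cos_sq a + Real.sin_sq_add_cos_sq b
  rw [h]
  linarith [Real.one_sub_sq_div_two_le_cos (x := a - b)]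

theorem mul_sinc (x : ℝ) : x * sinc x = Real.sin x := by
  by_cases hx : x = 0
  · simp [hx]
  · rw [sinc, if_neg hx, mul_div_cancel₀ _ hx]

theorem Rot_sub_Rot (a b : ℝ) :
    Rot a - Rot b = !![Real.cos a - Real.cos b, -(Real.sin a - Real.sin b);
      Real.sin a - Real.sin b, Real.cos a - Real.cos b] := by
  ext i j
  fin_cases i <;> fin_cases j <;> simp [Rot, neg_add_eq_sub]

theorem norm_toEuclideanCLM_Rot_sub_Rot_le (a b : ℝ) :
    ‖toEuclideanCLM (𝕜 := ℝ) (Rot a - Rot b)‖ ≤ |a - b| := by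
  rw [Rot_sub_Rot, ← Real.sqrt_sq_eq_abs]
  exact (norm_toEuclideanCLM_rotationScaling_le _ _).trans
    (Real.sqrt_le_sqrt (cos_sub_cos_sq_add_sin_sub_sin_sq_le a b))

theorem rote_lipschitz_center_general (n : ℕ) (θ : Fin n → ℝ)
    (r : ℝ) (hr : 0 < r) (c₁ c₂ : ℝ) :
    opNorm (RoTE θ c₁ r - RoTE θ c₂ r) ≤ |c₁ - c₂| / r := by
  rw [opNorm, RoTE, RoTE, ← blockDiagonal_sub]
  refine norm_toEuclideanCLM_blockDiagonal_le _ (by positivity) fun ℓ => ?_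
  rw [Pi.sub_apply, ← smul_sub, map_smul, norm_smul, Real.norm_eq_abs]
  calc |sinc (θ ℓ * r)| * ‖toEuclideanCLM (𝕜 := ℝ) (Rot (θ ℓ * c₁) - Rot (θ ℓ * c₂))‖
      ≤ |sinc (θ ℓ * r)| * |θ ℓ * c₁ - θ ℓ * c₂| := by
        gcongr
        exact norm_toEuclideanCLM_Rot_sub_Rot_le _ _
    _ = |θ ℓ * r * sinc (θ ℓ * r)| * (|c₁ - c₂| / r) := by
        rw [← mul_sub, abs_mul, abs_mul, abs_mul, abs_of_pos hr]
        field_simp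
    _ = |Real.sin (θ ℓ * r)| * (|c₁ - c₂| / r) := by rw [mul_sinc]
    _ ≤ |c₁ - c₂| / r := mul_le_of_le_one_left (by positivity) (Real.abs_sin_le_one _)

/-- for fixed `r > 0`, `c ↦ R_{c,r}` is Lipschitz in operator norm with
constant `1/r`. -/
theorem rote_lipschitz_center (n : ℕ) (hn : 1 ≤ n) (θ : Fin n → ℝ)
    (r : ℝ) (hr : 0 < r) (c₁ c₂ : ℝ) :
    opNorm (RoTE θ c₁ r - RoTE θ c₂ r) ≤ |c₁ - c₂| / r :=
  rote_lipschitz_center_general n θ r hr c₁ c₂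
end
end

section
/- For every fixed c ∈ ℝ and every a > 0, the map r ↦ R_{c,r} is Lipschitz in operator norm with constant 2/a on [a, ∞): for all r₁, r₂ ≥ a, ‖R_{c,r₁} − R_{c,r₂}‖_op ≤ (2/a) · |r₁ − r₂|. -/
noncomputable section

open MeasureTheory
open scoped RealInnerProductSpace

lemma abs_sin_sub_sin_le (x y : ℝ) : |Real.sin x - Real.sin y| ≤ |x - y| := by
  rw [Real.sin_sub_sin]
  have h1 : |Real.sin ((x - y) / 2)| ≤ |(x - y) / 2| := Real.abs_sin_le_abs
  have h2 : |Real.cos ((x + y) / 2)| ≤ 1 := Real.abs_cos_le_one _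
  calc |2 * Real.sin ((x - y) / 2) * Real.cos ((x + y) / 2)|
      = 2 * |Real.sin ((x - y) / 2)| * |Real.cos ((x + y) / 2)| := by
        rw [abs_mul, abs_mul, abs_two]
    _ ≤ 2 * |(x - y) / 2| * 1 := by
        apply mul_le_mul _ h2 (abs_nonneg _) (by positivity)
        exact mul_le_mul_of_nonneg_left h1 (by norm_num)
    _ = |x - y| := by rw [abs_div, abs_two]; ring

lemma sinc_diff_le {a r₁ r₂ : ℝ} (θ : ℝ) (ha : 0 < a) (h1 : a ≤ r₁) (h2 : a ≤ r₂) :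
    |sinc (θ * r₁) - sinc (θ * r₂)| ≤ 2 / a * |r₁ - r₂| := by
  rcases eq_or_ne θ 0 with rfl | hθ
  · simp [sinc]; positivity
  · have hr₁ : 0 < r₁ := ha.trans_le h1
    have hr₂ : 0 < r₂ := ha.trans_le h2
    have hx : θ * r₁ ≠ 0 := mul_ne_zero hθ hr₁.ne'
    have hy : θ * r₂ ≠ 0 := mul_ne_zero hθ hr₂.ne'
    set x := θ * r₁
    set y := θ * r₂
    rw [sinc, sinc, if_neg hx, if_neg hy]
    have key : Real.sin x / x - Real.sin y / y
        = (Real.sin x - Real.sin y) / x + Real.sin y * ((y - x) / (x * y)) := by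
      field_simp; ring
    rw [key]
    have hsy : |Real.sin y| ≤ |y| := Real.abs_sin_le_abs
    calc |(Real.sin x - Real.sin y) / x + Real.sin y * ((y - x) / (x * y))|
        ≤ |(Real.sin x - Real.sin y) / x| + |Real.sin y * ((y - x) / (x * y))| := abs_add_le _ _
      _ ≤ |x - y| / |x| + |x - y| / |x| := by
          gcongr ?_ + ?_
          · rw [abs_div]
            exact div_le_div_of_nonneg_right (abs_sin_sub_sin_le x y) (abs_nonneg x)
          · rw [abs_mul, abs_div, abs_mul]
            rw [div_eq_mul_inv, mul_inv, abs_sub_comm y x]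
            calc |Real.sin y| * (|x - y| * (|x|⁻¹ * |y|⁻¹))
                ≤ |y| * (|x - y| * (|x|⁻¹ * |y|⁻¹)) := by gcongr
              _ = |x - y| / |x| := by
                  field_simp
      _ = 2 * |x - y| / |x| := by ring
      _ ≤ 2 / a * |r₁ - r₂| := by
          have hxy : |x - y| = |θ| * |r₁ - r₂| := by
            rw [← abs_mul]; ring_nf; rfl
          have hxabs : |x| = |θ| * r₁ := by
            rw [abs_mul, abs_of_pos hr₁]
          have hθ0 : |θ| ≠ 0 := abs_ne_zero.2 hθ
          calc 2 * |x - y| / |x| = 2 * (|θ| * |r₁ - r₂|) / (|θ| * r₁) := by rw [hxy, hxabs]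
            _ = |θ| * (2 * |r₁ - r₂|) / (|θ| * r₁) := by ring_nf
            _ = 2 * |r₁ - r₂| / r₁ := mul_div_mul_left _ _ hθ0
            _ ≤ 2 * |r₁ - r₂| / a := by gcongr
            _ = 2 / a * |r₁ - r₂| := by ring

lemma opNorm_blockDiag_smul_rot {n : ℕ} (d x : Fin n → ℝ) (K : ℝ) (hK : 0 ≤ K)
    (hd : ∀ ℓ, |d ℓ| ≤ K) :
    opNorm (Matrix.blockDiagonal fun ℓ => d ℓ • Rot (x ℓ)) ≤ K := by
  set M := Matrix.blockDiagonal fun ℓ => d ℓ • Rot (x ℓ) with hM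
  apply ContinuousLinearMap.opNorm_le_bound _ hK
  intro v
  set w : EuclideanSpace ℝ (Fin 2 × Fin n) := Matrix.toEuclideanCLM (𝕜 := ℝ) M v with hw
  have hwp : ∀ p : Fin 2 × Fin n, w p = ∑ q : Fin 2 × Fin n, M p q * v q := by
    intro p
    rfl
  have hwval : ∀ (i : Fin 2) (ℓ : Fin n),
      w (i, ℓ) = d ℓ * (Rot (x ℓ) i 0 * v (0, ℓ) + Rot (x ℓ) i 1 * v (1, ℓ)) := by
    intro i ℓ
    rw [hwp, Fintype.sum_prod_type, Finset.sum_comm]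
    rw [Finset.sum_eq_single ℓ]
    · simp only [hM, Matrix.blockDiagonal_apply, if_pos rfl, Matrix.smul_apply, smul_eq_mul, if_true,
        Fin.sum_univ_two]
      ring
    · intro k _ hk
      simp [hM, Matrix.blockDiagonal_apply, Ne.symm hk]
    · simp
  have keysum : ∑ p : Fin 2 × Fin n, w p ^ 2 ≤ K ^ 2 * ∑ p : Fin 2 × Fin n, v p ^ 2 := by
    calc ∑ p : Fin 2 × Fin n, w p ^ 2
        = ∑ ℓ : Fin n, ∑ i : Fin 2, w (i, ℓ) ^ 2 := by
          rw [Fintype.sum_prod_type]; exact Finset.sum_comm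
      _ ≤ ∑ ℓ : Fin n, K ^ 2 * ∑ i : Fin 2, v (i, ℓ) ^ 2 := by
          apply Finset.sum_le_sum
          intro ℓ _
          have e : ∑ i : Fin 2, w (i, ℓ) ^ 2 = d ℓ ^ 2 * (v (0, ℓ) ^ 2 + v (1, ℓ) ^ 2) := by
            rw [Fin.sum_univ_two, hwval, hwval]
            have hsc : Real.sin (x ℓ) ^ 2 + Real.cos (x ℓ) ^ 2 = 1 := Real.sin_sq_add_cos_sq _
            simp only [Rot]
            norm_num [Matrix.cons_val_zero, Matrix.cons_val_one, Matrix.head_cons,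
              Matrix.cons_val', Matrix.empty_val', Matrix.cons_val_fin_one, Matrix.head_fin_const]
            nlinarith [hsc]
          rw [e, Fin.sum_univ_two]
          have hd2 : d ℓ ^ 2 ≤ K ^ 2 := by
            nlinarith [hd ℓ, abs_nonneg (d ℓ), sq_abs (d ℓ)]
          nlinarith [sq_nonneg (v (0, ℓ)), sq_nonneg (v (1, ℓ))]
      _ = K ^ 2 * ∑ p : Fin 2 × Fin n, v p ^ 2 := by
          rw [Fintype.sum_prod_type, ← Finset.mul_sum]
          congr 1
          exact Finset.sum_comm
  have hnw : ‖w‖ = Real.sqrt (∑ p, w p ^ 2) := by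
    rw [EuclideanSpace.norm_eq]
    congr 1
    apply Finset.sum_congr rfl
    intro p _
    rw [Real.norm_eq_abs, sq_abs]
  have hnv : ‖v‖ = Real.sqrt (∑ p, v p ^ 2) := by
    rw [EuclideanSpace.norm_eq]
    congr 1
    apply Finset.sum_congr rfl
    intro p _
    rw [Real.norm_eq_abs, sq_abs]
  calc ‖w‖ = Real.sqrt (∑ p, w p ^ 2) := hnw
    _ ≤ Real.sqrt (K ^ 2 * ∑ p, v p ^ 2) := Real.sqrt_le_sqrt keysum
    _ = K * Real.sqrt (∑ p, v p ^ 2) := by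
        rw [Real.sqrt_mul (by positivity), Real.sqrt_sq hK]
    _ = K * ‖v‖ := by rw [hnv]

/-- for fixed `c` and `a > 0`, `r ↦ R_{c,r}` is Lipschitz in operator
norm with constant `2/a` on `[a, ∞)`. -/
theorem rote_lipschitz_radius (n : ℕ) (hn : 1 ≤ n) (θ : Fin n → ℝ)
    (c a : ℝ) (ha : 0 < a) (r₁ r₂ : ℝ) (hr₁ : a ≤ r₁) (hr₂ : a ≤ r₂) :
    opNorm (RoTE θ c r₁ - RoTE θ c r₂) ≤ (2 / a) * |r₁ - r₂| := by
  have hdiff : RoTE θ c r₁ - RoTE θ c r₂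
      = Matrix.blockDiagonal fun ℓ => (sinc (θ ℓ * r₁) - sinc (θ ℓ * r₂)) • Rot (θ ℓ * c) := by
    ext ⟨i, k⟩ ⟨j, l⟩
    by_cases h : k = l <;>
      simp [RoTE, Matrix.blockDiagonal_apply, Matrix.sub_apply, sub_smul, h]
  rw [hdiff]
  apply opNorm_blockDiag_smul_rot
  · positivity
  · intro ℓ
    exact sinc_diff_le (θ ℓ) ha hr₁ hr₂
end
end

section
/- For every θ ∈ ℝ and r > 0, the frequency-response attenuation bound |θ| · |sinc(θ r)| = |sin(θ r)| / r ≤ 1/r holds; consequently, for every c ∈ ℝ and r > 0, the block-diagonal matrix D_{c,r} whose ℓ-th 2×2 diagonal block is θ_ℓ · sinc(θ_ℓ r) · [[−sin(θ_ℓ c), −cos(θ_ℓ c)], [cos(θ_ℓ c), −sin(θ_ℓ c)]] (the entrywise derivative of c ↦ R_{c,r}) satisfies ‖D_{c,r}‖_op ≤ 1/r. -/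
noncomputable section

open MeasureTheory
open scoped RealInnerProductSpace

private lemma key_scalar (θ₀ r : ℝ) (hr : 0 < r) :
    |θ₀| * |sinc (θ₀ * r)| = |Real.sin (θ₀ * r)| / r ∧
      |θ₀| * |sinc (θ₀ * r)| ≤ 1 / r := by
  have heq : |θ₀| * |sinc (θ₀ * r)| = |Real.sin (θ₀ * r)| / r := by
    by_cases h : θ₀ = 0
    · simp [h, sinc]
    · have hx : θ₀ * r ≠ 0 := mul_ne_zero h hr.ne'
      rw [sinc, if_neg hx, abs_div, abs_mul, abs_of_pos hr]
      have h0 : |θ₀| ≠ 0 := abs_ne_zero.mpr h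
      field_simp
  refine ⟨heq, heq.le.trans ?_⟩
  gcongr
  exact Real.abs_sin_le_one _

/-- frequency-response attenuation: `|θ| |sinc (θ r)| = |sin (θ r)|/r ≤ 1/r`;
consequently the entrywise derivative `D_{c,r}` of `c ↦ R_{c,r}` has operator norm
at most `1/r`. -/
theorem sinc_attenuation_and_derivative_opNorm_bound (n : ℕ) (hn : 1 ≤ n)
    (θ : Fin n → ℝ) :
    (∀ θ₀ r : ℝ, 0 < r →
      |θ₀| * |sinc (θ₀ * r)| = |Real.sin (θ₀ * r)| / r ∧
        |θ₀| * |sinc (θ₀ * r)| ≤ 1 / r) ∧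
    (∀ c r : ℝ, 0 < r →
      opNorm (Matrix.blockDiagonal fun ℓ : Fin n =>
          (θ ℓ * sinc (θ ℓ * r)) •
            !![-Real.sin (θ ℓ * c), -Real.cos (θ ℓ * c);
               Real.cos (θ ℓ * c), -Real.sin (θ ℓ * c)]) ≤ 1 / r) := by
  refine ⟨fun θ₀ r hr => key_scalar θ₀ r hr, fun c r hr => ?_⟩
  set a : Fin n → ℝ := fun ℓ => θ ℓ * sinc (θ ℓ * r) with ha_def
  have ha : ∀ ℓ, (a ℓ) ^ 2 ≤ (1 / r) ^ 2 := by
    intro ℓ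
    have h := (key_scalar (θ ℓ) r hr).2
    have habs : |a ℓ| ≤ 1 / r := by
      rw [ha_def]; simpa [abs_mul] using h
    calc (a ℓ) ^ 2 = |a ℓ| ^ 2 := (sq_abs _).symm
    _ ≤ (1 / r) ^ 2 := pow_le_pow_left₀ (abs_nonneg _) habs 2
  rw [opNorm]
  refine ContinuousLinearMap.opNorm_le_bound _ (by positivity) fun v => ?_
  set M : Matrix (Fin 2 × Fin n) (Fin 2 × Fin n) ℝ :=
    Matrix.blockDiagonal fun ℓ : Fin n =>
      (a ℓ) • !![-Real.sin (θ ℓ * c), -Real.cos (θ ℓ * c);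
               Real.cos (θ ℓ * c), -Real.sin (θ ℓ * c)] with hM
  set w : EuclideanSpace ℝ (Fin 2 × Fin n) := Matrix.toEuclideanCLM (𝕜 := ℝ) M v with hwdef
  have hw0 : ∀ p, w p = M.mulVec (fun q => v q) p := fun p => rfl
  have hw : ∀ i ℓ, w (i, ℓ) =
      a ℓ * ((!![-Real.sin (θ ℓ * c), -Real.cos (θ ℓ * c);
               Real.cos (θ ℓ * c), -Real.sin (θ ℓ * c)]) i 0 * v (0, ℓ)
         + (!![-Real.sin (θ ℓ * c), -Real.cos (θ ℓ * c);
               Real.cos (θ ℓ * c), -Real.sin (θ ℓ * c)]) i 1 * v (1, ℓ)) := by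
    intro i ℓ
    rw [hw0, Matrix.mulVec, dotProduct]
    rw [Fintype.sum_prod_type_right]
    simp [hM, Matrix.blockDiagonal_apply, Fin.sum_univ_two, mul_add, mul_comm]
    fin_cases i <;> simp <;> ring
  have hblock : ∀ ℓ, (w (0, ℓ)) ^ 2 + (w (1, ℓ)) ^ 2 =
      (a ℓ) ^ 2 * ((v (0, ℓ)) ^ 2 + (v (1, ℓ)) ^ 2) := by
    intro ℓ
    rw [hw 0 ℓ, hw 1 ℓ]
    have hpy := Real.sin_sq_add_cos_sq (θ ℓ * c)
    simp only [Matrix.cons_val', Matrix.cons_val_zero, Matrix.cons_val_one, Matrix.head_cons,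
      Matrix.empty_val', Matrix.cons_val_fin_one, Matrix.head_fin_const, Matrix.cons_val_one]
    norm_num
    nlinarith [hpy]
  have hsum : ∑ p : Fin 2 × Fin n, (w p) ^ 2 ≤ (1 / r) ^ 2 * ∑ p : Fin 2 × Fin n, (v p) ^ 2 := by
    rw [Fintype.sum_prod_type, Fin.sum_univ_two, ← Finset.sum_add_distrib,
      Fintype.sum_prod_type, Fin.sum_univ_two, ← Finset.sum_add_distrib, Finset.mul_sum]
    refine Finset.sum_le_sum fun ℓ _ => ?_
    rw [hblock ℓ]
    have hv : 0 ≤ (v (0, ℓ)) ^ 2 + (v (1, ℓ)) ^ 2 := by positivity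
    exact mul_le_mul_of_nonneg_right (ha ℓ) hv
  have hnw : ‖w‖ ^ 2 = ∑ p : Fin 2 × Fin n, (w p) ^ 2 := by
    rw [EuclideanSpace.norm_eq, Real.sq_sqrt (by positivity)]
    simp [Real.norm_eq_abs, sq_abs]
  have hnv : ‖v‖ ^ 2 = ∑ p : Fin 2 × Fin n, (v p) ^ 2 := by
    rw [EuclideanSpace.norm_eq, Real.sq_sqrt (by positivity)]
    simp [Real.norm_eq_abs, sq_abs]
  have hsq : ‖w‖ ^ 2 ≤ (1 / r * ‖v‖) ^ 2 := by
    rw [hnw, mul_pow, hnv]; exact hsum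
  have h1 : (0:ℝ) ≤ 1 / r * ‖v‖ := by positivity
  nlinarith [norm_nonneg w, hsq]
end
end
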